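/- arXiv:2202.05510 — 7 statements merged into one kernel-verified Lean document; each statement's English description precedes it below -/
import Mathlib

section
/- Suppose y_i > 0 for all i, and suppose there exists w*_{GM} ∈ ℝ^d with ⟨w*_{GM}, x_i⟩ = y_i for all i (so the ReLU loss vanishes at w*_{GM} with all data activated). Let w : [0,∞) → ℝ^d be a gradient flow of the ReLU loss with initial point w_0 = w(0). Then for every index j with x_j ≠ 0, ⟨w_0, x_j⟩ > 0, and y_j / ‖x_j‖ > ‖w_0 − w*_{GM}‖, the data point x_j stays activated along the whole flow: ⟨w(t), x_j⟩ > 0 for all t ≥ 0. -/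
/-
Along the flow, `g t = ‖w t - w*‖²` cannot increase. As `F` is discontinuous, the flow is only
Lipschitz, so we argue with increments: since `⟪F v, v - w*⟫ = ∑_{active i} (⟪v, x_i⟫ - y_i)² ≥ 0`,
expanding `g b - g a` with `w b - w a = -∫_a^b F(w s) ds` leaves only an `O((b - a)²)` error, and
summing over a fine partition of `[0, t]` gives `g t ≤ g 0`. Hence `w t` stays in the ball of radius
`‖w 0 - w*‖ < y_j / ‖x_j‖` around `w*`, on which `⟪w, x_j⟫ ≥ y_j - ‖w - w*‖ ‖x_j‖ > 0`.
-/

open MeasureTheory Set Filter Topology Finset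
open scoped RealInnerProductSpace

theorem le_of_forall_le_add_mul_sq {g : ℝ → ℝ} {C a b : ℝ} (hab : a ≤ b)
    (h : ∀ s t, a ≤ s → s ≤ t → t ≤ b → g t ≤ g s + C * (t - s) ^ 2) : g b ≤ g a := by
  have hstep : ∀ N : ℕ, 0 < N → g b - g a ≤ C * (b - a) ^ 2 / N := by
    intro N hN
    have hN' : (0 : ℝ) < N := Nat.cast_pos.2 hN
    set δ := (b - a) / N
    have hδ : 0 ≤ δ := div_nonneg (sub_nonneg.2 hab) hN'.le
    have hNδ : N * δ = b - a := mul_div_cancel₀ _ hN'.ne'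
    calc g b - g a = ∑ k ∈ range N, (g (a + (k + 1 : ℕ) * δ) - g (a + k * δ)) := by
          rw [sum_range_sub (fun k : ℕ => g (a + k * δ)), hNδ]
          simp
      _ ≤ ∑ k ∈ range N, C * δ ^ 2 := by
          refine sum_le_sum fun k hk => ?_
          have hkN : ((k + 1 : ℕ) : ℝ) * δ ≤ N * δ := by
            gcongr
            exact mem_range.1 hk
          have hinc := h (a + k * δ) (a + (k + 1 : ℕ) * δ) (by simp; positivity)
            (by gcongr; omega) (by linarith)
          rwa [show a + ((k + 1 : ℕ) : ℝ) * δ - (a + k * δ) = δ by push_cast; ring,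
            ← sub_le_iff_le_add'] at hinc
      _ = C * (b - a) ^ 2 / N := by
          rw [sum_const, card_range, nsmul_eq_mul, ← hNδ]
          field_simp
  have hlim : Tendsto (fun N : ℕ => C * (b - a) ^ 2 / N) atTop (𝓝 0) :=
    tendsto_const_div_atTop_nhds_zero_nat _
  have := ge_of_tendsto hlim (eventually_atTop.2 ⟨1, hstep⟩)
  linarith

section

variable {E : Type*} [NormedAddCommGroup E] [InnerProductSpace ℝ E]

theorem sub_eq_neg_intervalIntegral_of_eq_sub_integral {f w : ℝ → E} {T : ℝ}
    (hf : IntegrableOn f (Icc 0 T)) (hw : ∀ t ∈ Icc 0 T, w t = w 0 - ∫ s in 0..t, f s)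
    {a b : ℝ} (ha : 0 ≤ a) (hab : a ≤ b) (hb : b ≤ T) :
    w b - w a = -∫ s in a..b, f s := by
  have hint : ∀ c ∈ Icc 0 T, IntervalIntegrable f volume 0 c := fun c hc =>
    (intervalIntegrable_iff_integrableOn_Icc_of_le hc.1).2
      (hf.mono_set (Icc_subset_Icc_right hc.2))
  rw [hw b ⟨ha.trans hab, hb⟩, hw a ⟨ha, hab.trans hb⟩,
    ← intervalIntegral.integral_interval_sub_left (hint b ⟨ha.trans hab, hb⟩)
      (hint a ⟨ha, hab.trans hb⟩)]
  abel

theorem sq_norm_sub_le_of_inner_nonneg [CompleteSpace E] {f w : ℝ → E} {p : E} {M a b : ℝ}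
    (hab : a ≤ b) (hf : IntegrableOn f (Icc a b)) (hfM : ∀ s ∈ Icc a b, ‖f s‖ ≤ M)
    (hw : ∀ s ∈ Icc a b, w s - w a = -∫ r in a..s, f r)
    (hfp : ∀ s ∈ Icc a b, 0 ≤ ⟪f s, w s - p⟫) :
    ‖w b - p‖ ^ 2 ≤ ‖w a - p‖ ^ 2 + 3 * M ^ 2 * (b - a) ^ 2 := by
  have hM : 0 ≤ M := (norm_nonneg _).trans (hfM a ⟨le_rfl, hab⟩)
  have hmove : ∀ s ∈ Icc a b, ‖w s - w a‖ ≤ M * (b - a) := by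
    intro s hs
    rw [hw s hs, norm_neg]
    calc ‖∫ r in a..s, f r‖ ≤ M * |s - a| :=
          intervalIntegral.norm_integral_le_of_norm_le_const fun r hr => by
            rw [uIoc_of_le hs.1] at hr
            exact hfM r ⟨hr.1.le, hr.2.trans hs.2⟩
      _ ≤ M * (b - a) := by
          rw [abs_of_nonneg (sub_nonneg.2 hs.1)]
          exact mul_le_mul_of_nonneg_left (by linarith [hs.2]) hM
  -- `w a - p = (w s - p) + (w a - w s)`: the first part pairs nonnegatively with `f s`,
  -- the second is small because the curve moves at speed at most `M`
  have hlower : ∀ s ∈ Icc a b, -(M ^ 2 * (b - a)) ≤ ⟪w a - p, f s⟫ := by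
    intro s hs
    have hpair := hfp s hs
    have hcs := (neg_abs_le _).trans' (neg_le_neg (abs_real_inner_le_norm (f s) (w a - w s)))
    have hsmall : ‖f s‖ * ‖w a - w s‖ ≤ M * (M * (b - a)) := by
      rw [norm_sub_rev]
      exact mul_le_mul (hfM s hs) (hmove s hs) (norm_nonneg _) hM
    have hsplit : w a - p = (w s - p) + (w a - w s) := by abel
    rw [real_inner_comm, hsplit, inner_add_right]
    nlinarith
  have hinner : ⟪w a - p, w b - w a⟫ ≤ M ^ 2 * (b - a) ^ 2 := by
    have hint : IntegrableOn f (Ioc a b) := hf.mono_set Ioc_subset_Icc_self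
    have hmono := intervalIntegral.integral_mono_on hab intervalIntegrable_const
      ((intervalIntegrable_iff_integrableOn_Ioc_of_le hab).2
        ((innerSL ℝ (w a - p)).integrable_comp hint)) hlower
    simp only [intervalIntegral.integral_const, smul_eq_mul, innerSL_apply_apply] at hmono
    rw [hw b ⟨hab, le_rfl⟩, inner_neg_right, intervalIntegral.integral_of_le hab,
      ← integral_inner hint, ← intervalIntegral.integral_of_le hab]
    nlinarith
  have hsplit : w b - p = (w a - p) + (w b - w a) := by abel
  rw [hsplit, norm_add_sq_real]
  nlinarith [hmove b ⟨hab, le_rfl⟩, norm_nonneg (w b - w a)]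

theorem norm_sub_le_of_eq_sub_integral_of_inner_nonneg [CompleteSpace E]
    {f w : ℝ → E} {p : E} {M T : ℝ} (hT : 0 ≤ T) (hf : IntegrableOn f (Icc 0 T))
    (hfM : ∀ s ∈ Icc 0 T, ‖f s‖ ≤ M)
    (hw : ∀ t ∈ Icc 0 T, w t = w 0 - ∫ s in 0..t, f s)
    (hfp : ∀ s ∈ Icc 0 T, 0 ≤ ⟪f s, w s - p⟫) :
    ‖w T - p‖ ≤ ‖w 0 - p‖ := by
  have hsq : ‖w T - p‖ ^ 2 ≤ ‖w 0 - p‖ ^ 2 := by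
    refine le_of_forall_le_add_mul_sq (g := fun s => ‖w s - p‖ ^ 2) (C := 3 * M ^ 2) hT
      fun a b ha hab hb => ?_
    have hsub : Icc a b ⊆ Icc 0 T := Icc_subset_Icc ha hb
    exact sq_norm_sub_le_of_inner_nonneg hab (hf.mono_set hsub) (fun s hs => hfM s (hsub hs))
      (fun s hs => sub_eq_neg_intervalIntegral_of_eq_sub_integral hf hw ha hs.1 (hs.2.trans hb))
      (fun s hs => hfp s (hsub hs))
  exact (pow_le_pow_iff_left₀ (norm_nonneg _) (norm_nonneg _) two_ne_zero).1 hsq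

theorem inner_pos_of_norm_sub_lt_div {p v x : E} {y : ℝ} (hp : ⟪p, x⟫ = y) (hx : x ≠ 0)
    (h : ‖v - p‖ < y / ‖x‖) : 0 < ⟪v, x⟫ := by
  have hx' : 0 < ‖x‖ := norm_pos_iff.2 hx
  have h1 : ‖v - p‖ * ‖x‖ < y := (lt_div_iff₀ hx').1 h
  have h2 : -(‖v - p‖ * ‖x‖) ≤ ⟪v - p, x⟫ :=
    (neg_abs_le _).trans' (neg_le_neg (abs_real_inner_le_norm _ _))
  rw [inner_sub_left, hp] at h2
  linarith

end

section

variable {ι E : Type*} [Fintype ι] [NormedAddCommGroup E] [InnerProductSpace ℝ E]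

noncomputable def reluGradient (x : ι → E) (y : ι → ℝ) (w : E) : E :=
  ∑ i ∈ univ.filter (fun i => 0 < ⟪w, x i⟫), (⟪w, x i⟫ - y i) • x i

theorem inner_reluGradient_sub_nonneg {x : ι → E} {y : ι → ℝ} {p : E}
    (hp : ∀ i, ⟪p, x i⟫ = y i) (v : E) : 0 ≤ ⟪reluGradient x y v, v - p⟫ := by
  rw [reluGradient, sum_inner]
  refine sum_nonneg fun i _ => ?_
  rw [real_inner_smul_left, inner_sub_right, real_inner_comm v, real_inner_comm p, hp i]
  exact mul_self_nonneg _

theorem norm_reluGradient_le (x : ι → E) (y : ι → ℝ) {v : E} {R : ℝ} (hv : ‖v‖ ≤ R) :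
    ‖reluGradient x y v‖ ≤ ∑ i, (R * ‖x i‖ + |y i|) * ‖x i‖ := by
  calc ‖reluGradient x y v‖
      ≤ ∑ i ∈ univ.filter (fun i => 0 < ⟪v, x i⟫), ‖(⟪v, x i⟫ - y i) • x i‖ := norm_sum_le _ _
    _ ≤ ∑ i, ‖(⟪v, x i⟫ - y i) • x i‖ :=
        sum_le_sum_of_subset_of_nonneg (filter_subset _ _) fun _ _ _ => norm_nonneg _
    _ ≤ ∑ i, (R * ‖x i‖ + |y i|) * ‖x i‖ := sum_le_sum fun i _ => by
        rw [norm_smul, Real.norm_eq_abs]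
        gcongr
        calc |⟪v, x i⟫ - y i| ≤ |⟪v, x i⟫| + |y i| := abs_sub _ _
          _ ≤ R * ‖x i‖ + |y i| := by
            gcongr
            exact (abs_real_inner_le_norm _ _).trans (by gcongr)

theorem measurable_reluGradient [MeasurableSpace E] [BorelSpace E] [SecondCountableTopology E]
    (x : ι → E) (y : ι → ℝ) : Measurable (reluGradient x y) := by
  have hsum : reluGradient x y =
      fun v => ∑ i, if 0 < ⟪v, x i⟫ then (⟪v, x i⟫ - y i) • x i else 0 := by
    funext v
    exact sum_filter _ _
  have hinner : ∀ i, Continuous fun v : E => ⟪v, x i⟫ := fun i =>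
    continuous_id.inner continuous_const
  rw [hsum]
  refine Finset.measurable_fun_sum _ fun i _ => Measurable.ite ?_ ?_ measurable_const
  · exact measurableSet_lt measurable_const (hinner i).measurable
  · exact (((hinner i).sub continuous_const).smul continuous_const).measurable

end

theorem stmt4_general {n d : ℕ} (x : Fin n → EuclideanSpace ℝ (Fin d)) (y : Fin n → ℝ)
    (F : EuclideanSpace ℝ (Fin d) → EuclideanSpace ℝ (Fin d))
    (hF : ∀ w, F w = ∑ i ∈ Finset.univ.filter (fun i => 0 < (inner ℝ w (x i) : ℝ)),
        ((inner ℝ w (x i) : ℝ) - y i) • x i)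
    (wGM : EuclideanSpace ℝ (Fin d)) (hGM : ∀ i, (inner ℝ wGM (x i) : ℝ) = y i)
    (w : ℝ → EuclideanSpace ℝ (Fin d))
    (hcont : ContinuousOn w (Set.Ici 0))
    (hflow : ∀ t ≥ (0:ℝ), w t = w 0 - ∫ s in (0:ℝ)..t, F (w s))
    (j : Fin n) (hxj : x j ≠ 0)
    (hnorm : ‖w 0 - wGM‖ < y j / ‖x j‖) :
    ∀ t ≥ (0:ℝ), 0 < (inner ℝ (w t) (x j) : ℝ) := by
  intro t ht
  obtain rfl : F = reluGradient x y := funext hF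
  have hw : ContinuousOn w (Icc 0 t) := hcont.mono Icc_subset_Ici_self
  obtain ⟨R, hR⟩ := isCompact_Icc.exists_bound_of_continuousOn hw
  have hbound : ∀ s ∈ Icc 0 t,
      ‖reluGradient x y (w s)‖ ≤ ∑ i, (R * ‖x i‖ + |y i|) * ‖x i‖ :=
    fun s hs => norm_reluGradient_le x y (hR s hs)
  have hint : IntegrableOn (fun s => reluGradient x y (w s)) (Icc 0 t) :=
    .of_bound measure_Icc_lt_top
      ((measurable_reluGradient x y).comp_aemeasurable
        (hw.aemeasurable measurableSet_Icc)).aestronglyMeasurable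
      _ (ae_restrict_of_forall_mem measurableSet_Icc hbound)
  have hdist := norm_sub_le_of_eq_sub_integral_of_inner_nonneg ht hint hbound
    (fun s hs => hflow s hs.1) (fun s _ => inner_reluGradient_sub_nonneg hGM (w s))
  exact inner_pos_of_norm_sub_lt_div (hGM j) hxj (hdist.trans_lt hnorm)

/-- No-deactivation theorem: if the loss vanishes at `wGM` (all data fitted) and
`y j / ‖x j‖ > ‖w₀ − wGM‖` with `x j` activated at `w₀`, then `x j` stays
activated along the whole gradient flow. -/
theorem stmt4 {n d : ℕ} (x : Fin n → EuclideanSpace ℝ (Fin d)) (y : Fin n → ℝ)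
    (hy : ∀ i, 0 < y i)
    (F : EuclideanSpace ℝ (Fin d) → EuclideanSpace ℝ (Fin d))
    (hF : ∀ w, F w = ∑ i ∈ Finset.univ.filter (fun i => 0 < (inner ℝ w (x i) : ℝ)),
        ((inner ℝ w (x i) : ℝ) - y i) • x i)
    (wGM : EuclideanSpace ℝ (Fin d)) (hGM : ∀ i, (inner ℝ wGM (x i) : ℝ) = y i)
    (w : ℝ → EuclideanSpace ℝ (Fin d))
    (hcont : ContinuousOn w (Set.Ici 0))
    (hflow : ∀ t ≥ (0:ℝ), w t = w 0 - ∫ s in (0:ℝ)..t, F (w s))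
    (j : Fin n) (hxj : x j ≠ 0) (hact : 0 < (inner ℝ (w 0) (x j) : ℝ))
    (hnorm : ‖w 0 - wGM‖ < y j / ‖x j‖) :
    ∀ t ≥ (0:ℝ), 0 < (inner ℝ (w t) (x j) : ℝ) :=
  stmt4_general x y F hF wGM hGM w hcont hflow j hxj hnorm
end

section
/- Let x_1, …, x_n ∈ ℝ² satisfy x_i ≥ 0 componentwise and x_i ≠ 0 for every i. Let w_1, w_2 ∈ ℝ² both lie in the open second quadrant (first coordinate negative, second coordinate positive). Then the activation sets are nested: either {i : ⟨w_1, x_i⟩ > 0} ⊆ {i : ⟨w_2, x_i⟩ > 0} or {i : ⟨w_2, x_i⟩ > 0} ⊆ {i : ⟨w_1, x_i⟩ > 0}. -/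
open Matrix

/-! For `w 1 > 0` and `x 0 ≥ 0`, the point `x` is activated at `w` exactly when
`x 1 > (-w 0 / w 1) * x 0`, so activation is monotone in the slope `-w 0 / w 1`: the parameter
with the smaller slope activates every point the other one does. The slopes are compared
without division through the cross-multiplied inequality `w' 1 * w 0 ≤ w 1 * w' 0`. -/

theorem dotProduct_pos_of_cross_le {w w' v : Fin 2 → ℝ} (hw : 0 < w 1) (hw' : 0 < w' 1)
    (hcross : w' 1 * w 0 ≤ w 1 * w' 0) (hv : 0 ≤ v 0) (h : 0 < w ⬝ᵥ v) : 0 < w' ⬝ᵥ v := by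
  have key : w' 1 * (w ⬝ᵥ v) ≤ w 1 * (w' ⬝ᵥ v) := by
    simp only [dotProduct, Fin.sum_univ_two]
    nlinarith [mul_le_mul_of_nonneg_right hcross hv]
  exact pos_of_mul_pos_right ((mul_pos hw' h).trans_le key) hw.le

theorem setOf_dotProduct_pos_subset_of_cross_le {ι : Type*} (x : ι → Fin 2 → ℝ)
    (hx : ∀ i, 0 ≤ x i 0) {w w' : Fin 2 → ℝ} (hw : 0 < w 1) (hw' : 0 < w' 1)
    (hcross : w' 1 * w 0 ≤ w 1 * w' 0) :
    {i | 0 < w ⬝ᵥ x i} ⊆ {i | 0 < w' ⬝ᵥ x i} :=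
  fun i hi => dotProduct_pos_of_cross_le hw hw' hcross (hx i) hi

theorem stmt8_general {n : ℕ} (x : Fin n → (Fin 2 → ℝ))
    (hxnn : ∀ i k, 0 ≤ x i k)
    (w1 w2 : Fin 2 → ℝ)
    (h1 : w1 0 < 0 ∧ 0 < w1 1) (h2 : w2 0 < 0 ∧ 0 < w2 1) :
    {i | 0 < w1 ⬝ᵥ x i} ⊆ {i | 0 < w2 ⬝ᵥ x i} ∨
    {i | 0 < w2 ⬝ᵥ x i} ⊆ {i | 0 < w1 ⬝ᵥ x i} := by
  have hx : ∀ i, 0 ≤ x i 0 := fun i => hxnn i 0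
  rcases le_total (w2 1 * w1 0) (w1 1 * w2 0) with hcross | hcross
  · exact .inl (setOf_dotProduct_pos_subset_of_cross_le x hx h1.2 h2.2 hcross)
  · exact .inr (setOf_dotProduct_pos_subset_of_cross_le x hx h2.2 h1.2 hcross)

/-- Ordering of partitions in ℝ²: for nonnegative nonzero data and two
parameters in the open second quadrant, the activation sets are nested. -/
theorem stmt8 {n : ℕ} (x : Fin n → (Fin 2 → ℝ))
    (hxnn : ∀ i k, 0 ≤ x i k) (hxne : ∀ i, x i ≠ 0)
    (w1 w2 : Fin 2 → ℝ)
    (h1 : w1 0 < 0 ∧ 0 < w1 1) (h2 : w2 0 < 0 ∧ 0 < w2 1) :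
    {i | 0 < w1 ⬝ᵥ x i} ⊆ {i | 0 < w2 ⬝ᵥ x i} ∨
    {i | 0 < w2 ⬝ᵥ x i} ⊆ {i | 0 < w1 ⬝ᵥ x i} :=
  stmt8_general x hxnn w1 w2 h1 h2
end

section
/- Let x_1, …, x_n ∈ ℝ^d with n ≥ 1, d ≥ 1, and x_i ≠ 0 for every i. Then the number of realizable strict activation patterns, i.e., the cardinality of the set {σ : {1,…,n} → {true, false} | ∃ w ∈ ℝ^d such that for every i, ⟨w, x_i⟩ ≠ 0 and (σ(i) = true ⇔ ⟨w, x_i⟩ > 0)}, is at most 2 ∑_{k=0}^{d−1} C(n−1, k), where C denotes the binomial coefficient. -/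
/-!
Deletion–restriction. Split the patterns of `f₀, f₁, …, fₙ` according to the sign on `f₀`.
Forgetting that sign is injective on each half, and a pattern of `f₁, …, fₙ` that extends with
both signs is realized, by a positive combination of the two realizers, on the hyperplane
`ker f₀`. So the number of patterns obeys `r(n + 1, d) ≤ r(n, d) + r(n, d - 1)`, which is Pascal's
rule for the bound.
-/

lemma Nat.sum_range_succ_choose_succ (m e : ℕ) :
    ∑ k ∈ Finset.range (e + 1), (m + 1).choose k
      = ∑ k ∈ Finset.range (e + 1), m.choose k + ∑ k ∈ Finset.range e, m.choose k := by
  rw [Finset.sum_range_succ' (fun k => (m + 1).choose k),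
    Finset.sum_range_succ' (fun k => m.choose k)]
  simp only [Nat.choose_succ_succ, Finset.sum_add_distrib, Nat.choose_zero_right]
  ring

lemma two_le_two_mul_sum_range_succ_choose (m e : ℕ) :
    2 ≤ 2 * ∑ k ∈ Finset.range (e + 1), m.choose k := by
  rw [Finset.sum_range_succ']
  simp

namespace ActivationPattern

variable {𝕜 V ι : Type*} [Field 𝕜] [LinearOrder 𝕜] [AddCommGroup V] [Module 𝕜 V]

def Realizes (f : ι → V →ₗ[𝕜] 𝕜) (σ : ι → Bool) (w : V) : Prop :=
  ∀ i, f i w ≠ 0 ∧ (σ i = true ↔ 0 < f i w)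

def patterns (f : ι → V →ₗ[𝕜] 𝕜) : Set (ι → Bool) :=
  {σ | ∃ w, Realizes f σ w}

lemma ne_zero_and_iff_pos_cond [IsStrictOrderedRing 𝕜] (b : Bool) (y : 𝕜) :
    (y ≠ 0 ∧ (b = true ↔ 0 < y)) ↔ 0 < cond b y (-y) := by
  cases b
  · simp only [Bool.false_eq_true, false_iff, not_lt, cond_false, neg_pos]
    exact ⟨fun h => lt_of_le_of_ne h.2 h.1, fun h => ⟨h.ne, h.le⟩⟩
  · simp only [true_iff, cond_true]
    exact ⟨And.right, fun h => ⟨h.ne', h⟩⟩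

lemma realizes_iff [IsStrictOrderedRing 𝕜] {f : ι → V →ₗ[𝕜] 𝕜} {σ : ι → Bool} {w : V} :
    Realizes f σ w ↔ ∀ i, 0 < cond (σ i) (f i w) (-f i w) :=
  forall_congr' fun i => ne_zero_and_iff_pos_cond (σ i) (f i w)

lemma Realizes.smul_add_smul [IsStrictOrderedRing 𝕜] {f : ι → V →ₗ[𝕜] 𝕜} {σ : ι → Bool}
    {w₁ w₂ : V} {a b : 𝕜}
    (h₁ : Realizes f σ w₁) (h₂ : Realizes f σ w₂) (ha : 0 < a) (hb : 0 < b) :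
    Realizes f σ (a • w₁ + b • w₂) := by
  rw [realizes_iff] at *
  intro i
  have hlin : cond (σ i) (f i (a • w₁ + b • w₂)) (-f i (a • w₁ + b • w₂))
      = a * cond (σ i) (f i w₁) (-f i w₁) + b * cond (σ i) (f i w₂) (-f i w₂) := by
    cases σ i <;>
      simp only [map_add, map_smul, smul_eq_mul, cond_true, cond_false, mul_neg, neg_add]
  rw [hlin]
  exact add_pos (mul_pos ha (h₁ i)) (mul_pos hb (h₂ i))

lemma patterns_eq_empty_of_eq_zero {f : ι → V →ₗ[𝕜] 𝕜} {i : ι} (hi : f i = 0) :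
    patterns f = ∅ :=
  Set.eq_empty_of_forall_notMem fun _ ⟨w, hw⟩ => (hw i).1 (by simp [hi])

lemma realizes_domRestrict_iff {f : ι → V →ₗ[𝕜] 𝕜} {p : Submodule 𝕜 V} {σ : ι → Bool} {w : p} :
    Realizes (fun i => (f i).domRestrict p) σ w ↔ Realizes f σ w :=
  Iff.rfl

variable {n : ℕ}

lemma Realizes.tail {f : Fin (n + 1) → V →ₗ[𝕜] 𝕜} {σ : Fin (n + 1) → Bool} {w : V}
    (h : Realizes f σ w) : Realizes (Fin.tail f) (Fin.tail σ) w :=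
  fun i => h i.succ

lemma tail_mem_patterns_domRestrict_ker [IsStrictOrderedRing 𝕜] {f : Fin (n + 1) → V →ₗ[𝕜] 𝕜}
    {σ₁ σ₂ : Fin (n + 1) → Bool} (h₁ : σ₁ ∈ patterns f) (h₂ : σ₂ ∈ patterns f)
    (hσ₁ : σ₁ 0 = true) (hσ₂ : σ₂ 0 ≠ true) (htail : Fin.tail σ₁ = Fin.tail σ₂) :
    Fin.tail σ₁ ∈ patterns (fun i => (Fin.tail f i).domRestrict (LinearMap.ker (f 0))) := by
  obtain ⟨w₁, hw₁⟩ := h₁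
  obtain ⟨w₂, hw₂⟩ := h₂
  have hpos : 0 < f 0 w₁ := (hw₁ 0).2.mp hσ₁
  have hneg : 0 < -f 0 w₂ := by
    have := (ne_zero_and_iff_pos_cond _ _).mp (hw₂ 0)
    rwa [Bool.eq_false_iff.mpr hσ₂] at this
  have hker : f 0 w₁ • w₂ + (-f 0 w₂) • w₁ ∈ LinearMap.ker (f 0) := by
    simp only [LinearMap.mem_ker, map_add, map_smul, smul_eq_mul]
    ring
  refine ⟨⟨_, hker⟩, realizes_domRestrict_iff.mpr ?_⟩
  have hw₁' := hw₁.tail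
  rw [htail] at hw₁' ⊢
  exact hw₂.tail.smul_add_smul hw₁' hpos hneg

lemma injOn_tail_of_apply_zero_eq (s : Set (Fin (n + 1) → Bool))
    (hs : ∀ σ ∈ s, ∀ τ ∈ s, σ 0 = τ 0) : Set.InjOn Fin.tail s := by
  intro σ hσ τ hτ h
  rw [← Fin.cons_self_tail σ, ← Fin.cons_self_tail τ, h, hs σ hσ τ hτ]

theorem ncard_patterns_le_add [IsStrictOrderedRing 𝕜] (f : Fin (n + 1) → V →ₗ[𝕜] 𝕜) :
    (patterns f).ncard ≤ (patterns (Fin.tail f)).ncard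
      + (patterns (fun i => (Fin.tail f i).domRestrict (LinearMap.ker (f 0)))).ncard := by
  set S := patterns f
  set P := S ∩ {σ | σ 0 = true}
  set N := S \ {σ | σ 0 = true}
  have hP : Set.InjOn Fin.tail P :=
    injOn_tail_of_apply_zero_eq P fun σ hσ τ hτ => hσ.2.trans hτ.2.symm
  have hN : Set.InjOn Fin.tail N :=
    injOn_tail_of_apply_zero_eq N fun σ hσ τ hτ =>
      (Bool.eq_false_iff.mpr hσ.2).trans (Bool.eq_false_iff.mpr hτ.2).symm
  have hunion : Fin.tail '' P ∪ Fin.tail '' N ⊆ patterns (Fin.tail f) := by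
    rintro _ (⟨σ, ⟨⟨w, hw⟩, -⟩, rfl⟩ | ⟨σ, ⟨⟨w, hw⟩, -⟩, rfl⟩) <;> exact ⟨w, hw.tail⟩
  have hinter : Fin.tail '' P ∩ Fin.tail '' N
      ⊆ patterns (fun i => (Fin.tail f i).domRestrict (LinearMap.ker (f 0))) := by
    rintro _ ⟨⟨σ₁, ⟨h₁, hσ₁⟩, rfl⟩, ⟨σ₂, ⟨h₂, hσ₂⟩, htail⟩⟩
    exact tail_mem_patterns_domRestrict_ker h₁ h₂ hσ₁ hσ₂ htail.symm
  calc S.ncard = P.ncard + N.ncard := (Set.ncard_inter_add_ncard_sdiff_eq_ncard _ _).symm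
    _ = (Fin.tail '' P).ncard + (Fin.tail '' N).ncard := by
      rw [hP.ncard_image, hN.ncard_image]
    _ = (Fin.tail '' P ∪ Fin.tail '' N).ncard + (Fin.tail '' P ∩ Fin.tail '' N).ncard :=
      (Set.ncard_union_add_ncard_inter _ _).symm
    _ ≤ _ := add_le_add (Set.ncard_le_ncard hunion) (Set.ncard_le_ncard hinter)

lemma ncard_patterns_le_of_le_one [IsStrictOrderedRing 𝕜] (hn : n ≤ 1) (e : ℕ)
    (f : Fin n → V →ₗ[𝕜] 𝕜) :
    (patterns f).ncard ≤ 2 * ∑ k ∈ Finset.range (e + 1), (n - 1).choose k :=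
  calc (patterns f).ncard ≤ Nat.card (Fin n → Bool) := Set.ncard_le_card _
    _ = 2 ^ n := by simp
    _ ≤ 2 ^ 1 := Nat.pow_le_pow_right two_pos hn
    _ ≤ _ := two_le_two_mul_sum_range_succ_choose _ _

theorem ncard_patterns_le [IsStrictOrderedRing 𝕜] [FiniteDimensional 𝕜 V] {d : ℕ}
    -- for `n = d = 0` the empty pattern is realized, but the bound is `0`
    (hnd : n ≠ 0 ∨ d ≠ 0) (hV : Module.finrank 𝕜 V ≤ d) (f : Fin n → V →ₗ[𝕜] 𝕜) :
    (patterns f).ncard ≤ 2 * ∑ k ∈ Finset.range d, (n - 1).choose k := by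
  induction n generalizing V d with
  | zero =>
    obtain _ | e := d
    · simp at hnd
    exact ncard_patterns_le_of_le_one (by simp) e f
  | succ n ih =>
    obtain _ | e := d
    · have hf : f 0 = 0 := by
        ext w
        simp [finrank_zero_iff_forall_zero.mp (Nat.le_zero.mp hV) w]
      simp [patterns_eq_empty_of_eq_zero hf]
    obtain _ | m := n
    · exact ncard_patterns_le_of_le_one le_rfl e f
    by_cases hf : f 0 = 0
    · simp [patterns_eq_empty_of_eq_zero hf]
    have hker : Module.finrank 𝕜 (LinearMap.ker (f 0)) ≤ e := by
      have := Submodule.finrank_lt (mt LinearMap.ker_eq_top.mp hf)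
      omega
    calc (patterns f).ncard ≤ _ := ncard_patterns_le_add f
      _ ≤ 2 * ∑ k ∈ Finset.range (e + 1), m.choose k + 2 * ∑ k ∈ Finset.range e, m.choose k :=
        add_le_add (ih (Or.inl m.succ_ne_zero) hV _) (ih (Or.inl m.succ_ne_zero) hker _)
      _ = 2 * ∑ k ∈ Finset.range (e + 1), (m + 1 + 1 - 1).choose k := by
        rw [Nat.add_sub_cancel, Nat.sum_range_succ_choose_succ]
        ring

end ActivationPattern

theorem stmt9_general {n d : ℕ} (hd : 1 ≤ d)
    (x : Fin n → (Fin d → ℝ)) :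
    {σ : Fin n → Bool | ∃ w : Fin d → ℝ,
        ∀ i, w ⬝ᵥ x i ≠ 0 ∧ (σ i = true ↔ 0 < w ⬝ᵥ x i)}.ncard
      ≤ 2 * ∑ k ∈ Finset.range d, (n - 1).choose k :=
  ActivationPattern.ncard_patterns_le (Or.inr (Nat.one_le_iff_ne_zero.mp hd)) (by simp)
    (fun i => (dotProductBilin ℝ ℝ).flip (x i))

/-- The number of realizable strict activation patterns of a central hyperplane
arrangement of `n` nonzero vectors in ℝ^d is at most `2 ∑_{k<d} C(n−1,k)`. -/
theorem stmt9 {n d : ℕ} (hn : 1 ≤ n) (hd : 1 ≤ d)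
    (x : Fin n → (Fin d → ℝ)) (hx : ∀ i, x i ≠ 0) :
    {σ : Fin n → Bool | ∃ w : Fin d → ℝ,
        ∀ i, w ⬝ᵥ x i ≠ 0 ∧ (σ i = true ↔ 0 < w ⬝ᵥ x i)}.ncard
      ≤ 2 * ∑ k ∈ Finset.range d, (n - 1).choose k :=
  stmt9_general hd x
end

section
/- Let H be a symmetric positive semidefinite d×d real matrix with an orthonormal eigenbasis e_1, …, e_d, and let w* ∈ ℝ^d with c_k* := ⟨e_k, w*⟩ ≥ 0 for all k. Define g(w) := ⟨w, H(w − w*)⟩. Then: (i) for every w with 0 ≤ ⟨e_k, w⟩ ≤ c_k* for all k (i.e., w in the hyperrectangle of H), one has g(w) ≤ 0; (ii) for every vertex of the hyperrectangle, i.e., every w with ⟨e_k, w⟩ ∈ {0, c_k*} for all k, one has g(w) = 0. Hence the hyperrectangle of H is contained in the norm-increasing ellipsoid {w : g(w) ≤ 0}, and every vertex lies on its boundary. -/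
open Matrix

/-!
Expanding in the orthonormal eigenbasis, with `c_k = ⟨e_k, w⟩`,
`g(w) = ∑ₖ μₖ cₖ (cₖ - cₖ*)`. Each summand is `≤ 0` when `0 ≤ cₖ ≤ cₖ*` (as `μₖ ≥ 0`),
and vanishes when `cₖ ∈ {0, cₖ*}`.
-/

section OrthonormalRows

variable {R n : Type*} [CommRing R] [Fintype n] [DecidableEq n] {e : n → n → R}

/-- Orthonormal rows make the matrix orthogonal, so its columns are orthonormal too. -/
theorem sum_dotProduct_smul_of_orthonormal
    (horth : ∀ k l, e k ⬝ᵥ e l = if k = l then (1 : R) else 0) (v : n → R) :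
    ∑ k, (e k ⬝ᵥ v) • e k = v := by
  have hrows : of e * (of e)ᵀ = 1 := by
    ext k l
    simpa [mul_apply, one_apply, dotProduct] using horth k l
  have hcols : (of e)ᵀ * of e = 1 := mul_eq_one_comm.mp hrows
  calc ∑ k, (e k ⬝ᵥ v) • e k = (of e)ᵀ *ᵥ (of e *ᵥ v) := by
        rw [mulVec_transpose, vecMul_eq_sum]
        rfl
    _ = v := by rw [mulVec_mulVec, hcols, one_mulVec]

theorem dotProduct_mulVec_eq_sum_of_eigenbasis
    (horth : ∀ k l, e k ⬝ᵥ e l = if k = l then (1 : R) else 0)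
    {H : Matrix n n R} {μ : n → R} (heig : ∀ k, H *ᵥ e k = μ k • e k) (x y : n → R) :
    x ⬝ᵥ H *ᵥ y = ∑ k, μ k * (e k ⬝ᵥ x) * (e k ⬝ᵥ y) := by
  conv_lhs => rw [← sum_dotProduct_smul_of_orthonormal horth y]
  simp only [mulVec_sum, mulVec_smul, heig, dotProduct_sum, dotProduct_smul, smul_eq_mul]
  exact Finset.sum_congr rfl fun k _ => by rw [dotProduct_comm x]; ring

end OrthonormalRows

theorem stmt13_general {d : ℕ} (H : Matrix (Fin d) (Fin d) ℝ)
    (e : Fin d → (Fin d → ℝ)) (μ : Fin d → ℝ)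
    (heig : ∀ k, H.mulVec (e k) = μ k • e k) (hμ : ∀ k, 0 ≤ μ k)
    (horth : ∀ k l, e k ⬝ᵥ e l = if k = l then (1:ℝ) else 0)
    (wstar : Fin d → ℝ) (cstar : Fin d → ℝ)
    (hc : ∀ k, cstar k = e k ⬝ᵥ wstar)
    (g : (Fin d → ℝ) → ℝ) (hg : ∀ w, g w = w ⬝ᵥ H.mulVec (w - wstar)) :
    (∀ w : Fin d → ℝ, (∀ k, 0 ≤ e k ⬝ᵥ w ∧ e k ⬝ᵥ w ≤ cstar k) → g w ≤ 0) ∧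
    (∀ w : Fin d → ℝ, (∀ k, e k ⬝ᵥ w = 0 ∨ e k ⬝ᵥ w = cstar k) → g w = 0) := by
  have hg_sum : ∀ w, g w = ∑ k, μ k * (e k ⬝ᵥ w) * (e k ⬝ᵥ w - cstar k) := by
    intro w
    simp only [hg, dotProduct_mulVec_eq_sum_of_eigenbasis horth heig, dotProduct_sub, hc]
  refine ⟨fun w hw => ?_, fun w hw => ?_⟩
  · rw [hg_sum]
    exact Finset.sum_nonpos fun k _ =>
      mul_nonpos_of_nonneg_of_nonpos (mul_nonneg (hμ k) (hw k).1) (sub_nonpos.2 (hw k).2)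
  · rw [hg_sum]
    exact Finset.sum_eq_zero fun k _ => by rcases hw k with h | h <;> simp [h]

/-- The hyperrectangle of a symmetric PSD matrix `H` is contained in the
norm-increasing ellipsoid `{w : g(w) ≤ 0}` with `g(w) = ⟨w, H(w − w*)⟩`, and
every vertex of the hyperrectangle lies on its boundary. -/
theorem stmt13 {d : ℕ} (H : Matrix (Fin d) (Fin d) ℝ) (hpsd : H.PosSemidef)
    (e : Fin d → (Fin d → ℝ)) (μ : Fin d → ℝ)
    (heig : ∀ k, H.mulVec (e k) = μ k • e k) (hμ : ∀ k, 0 ≤ μ k)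
    (horth : ∀ k l, e k ⬝ᵥ e l = if k = l then (1:ℝ) else 0)
    (wstar : Fin d → ℝ) (cstar : Fin d → ℝ)
    (hc : ∀ k, cstar k = e k ⬝ᵥ wstar) (hcnn : ∀ k, 0 ≤ cstar k)
    (g : (Fin d → ℝ) → ℝ) (hg : ∀ w, g w = w ⬝ᵥ H.mulVec (w - wstar)) :
    (∀ w : Fin d → ℝ, (∀ k, 0 ≤ e k ⬝ᵥ w ∧ e k ⬝ᵥ w ≤ cstar k) → g w ≤ 0) ∧
    (∀ w : Fin d → ℝ, (∀ k, e k ⬝ᵥ w = 0 ∨ e k ⬝ᵥ w = cstar k) → g w = 0) :=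
  stmt13_general H e μ heig hμ horth wstar cstar hc g hg
end

section
/- Let H be a symmetric positive semidefinite d×d real matrix and ŵ ∈ ℝ^d. Then the function t ↦ ‖(I − exp(−tH)) ŵ‖ is monotone nondecreasing on [0, ∞): for all 0 ≤ s ≤ t, ‖(I − exp(−sH)) ŵ‖ ≤ ‖(I − exp(−tH)) ŵ‖. In particular, the norm of the gradient flow ẇ = −H(w − ŵ) initialized at w(0) = 0, whose solution is w(t) = (I − exp(−tH)) ŵ, increases monotonically. -/
/-!
Write `1 - exp (-(t • H)) = f_t(H)` in the continuous functional calculus, with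
`f_t(x) = 1 - exp (-(t x))`. Since `f_t(H)` is symmetric, `‖f_t(H) ŵ‖² = ⟨ŵ, f_t(H)² ŵ⟩`, and
`f_t(H)² = (f_t²)(H)`. On the spectrum of `H`, which lies in `[0, ∞)`, `f_s² ≤ f_t²` for
`0 ≤ s ≤ t`, so monotonicity of the functional calculus gives `f_s(H)² ≤ f_t(H)²` in the
Loewner order, and the quadratic forms at `ŵ` compare accordingly.
-/

open Matrix
open scoped MatrixOrder

namespace Matrix

variable {n : Type*} [Fintype n]

theorem mulVec_dotProduct_mulVec_self (M : Matrix n n ℝ) (w : n → ℝ) :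
    M *ᵥ w ⬝ᵥ M *ᵥ w = w ⬝ᵥ (Mᵀ * M) *ᵥ w := by
  rw [← mulVec_mulVec, dotProduct_mulVec w, vecMul_transpose]

variable [DecidableEq n]

theorem IsHermitian.exp_eq_cfc {A : Matrix n n ℝ} (hA : A.IsHermitian) :
    NormedSpace.exp A = cfc Real.exp A := by
  set U : Matrix n n ℝ := (hA.eigenvectorUnitary : Matrix n n ℝ)
  have hstar : star U = U⁻¹ := (inv_eq_left_inv (Unitary.coe_star_mul_self _)).symm
  conv_lhs => rw [hA.spectral_theorem]
  rw [hA.cfc_eq, IsHermitian.cfc, Unitary.conjStarAlgAut_apply, Unitary.conjStarAlgAut_apply,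
    hstar, exp_conj _ _ Unitary.isUnit_coe, exp_diagonal]
  congr
  ext
  simp [Real.exp_eq_exp_ℝ]

theorem IsHermitian.one_sub_exp_neg_smul {A : Matrix n n ℝ} (hA : A.IsHermitian) (t : ℝ) :
    1 - NormedSpace.exp (-(t • A)) = cfc (fun x => 1 - Real.exp (-(t * x))) A := by
  have hA' : IsSelfAdjoint A := hA
  rw [cfc_sub (fun _ => 1) _ A, cfc_const_one ℝ A, cfc_comp' Real.exp (fun x => -(t * x)) A,
    cfc_neg _ A, cfc_const_mul_id t A,
    (((IsSelfAdjoint.all t).smul hA').neg).isHermitian.exp_eq_cfc]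

theorem cfc_mulVec_dotProduct_self_le {A : Matrix n n ℝ} {f g : ℝ → ℝ}
    (hfg : ∀ x ∈ spectrum ℝ A, f x ^ 2 ≤ g x ^ 2) (w : n → ℝ) :
    cfc f A *ᵥ w ⬝ᵥ cfc f A *ᵥ w ≤ cfc g A *ᵥ w ⬝ᵥ cfc g A *ᵥ w := by
  have hcont (h : ℝ → ℝ) : ContinuousOn h (spectrum ℝ A) := A.finite_spectrum.continuousOn h
  have hsq (h : ℝ → ℝ) : (cfc h A)ᵀ * cfc h A = cfc (fun x => h x ^ 2) A := by
    have hsymm : (cfc h A).IsSymm := isHermitian_iff_isSymm.mp (cfc_predicate h A)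
    rw [hsymm.eq, ← cfc_mul h h A (hcont h) (hcont h)]
    simp only [sq]
  have hle : cfc (fun x => f x ^ 2) A ≤ cfc (fun x => g x ^ 2) A :=
    cfc_mono hfg (hcont _) (hcont _)
  have hquad := (le_iff.mp hle).dotProduct_mulVec_nonneg w
  rw [sub_mulVec, dotProduct_sub, star_trivial] at hquad
  rw [mulVec_dotProduct_mulVec_self, mulVec_dotProduct_mulVec_self, hsq, hsq]
  linarith

end Matrix

theorem Real.sq_one_sub_exp_neg_mul_le {s t x : ℝ} (hs : 0 ≤ s) (hst : s ≤ t) (hx : 0 ≤ x) :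
    (1 - Real.exp (-(s * x))) ^ 2 ≤ (1 - Real.exp (-(t * x))) ^ 2 := by
  have hs_nonneg : 0 ≤ 1 - Real.exp (-(s * x)) := by
    rw [sub_nonneg, Real.exp_le_one_iff, neg_nonpos]
    positivity
  have hexp : Real.exp (-(t * x)) ≤ Real.exp (-(s * x)) := by
    rw [Real.exp_le_exp, neg_le_neg_iff]
    exact mul_le_mul_of_nonneg_right hst hx
  exact pow_le_pow_left₀ hs_nonneg (by linarith) 2

/-- The Euclidean norm of the gradient flow `w(t) = (I − exp(−tH)) ŵ` of a
quadratic loss initialized at `0` is monotone nondecreasing in `t`. -/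
theorem stmt14 {d : ℕ} (H : Matrix (Fin d) (Fin d) ℝ) (hpsd : H.PosSemidef)
    (what : Fin d → ℝ) :
    ∀ s t : ℝ, 0 ≤ s → s ≤ t →
      Real.sqrt (((1 - NormedSpace.exp (-(s • H))).mulVec what) ⬝ᵥ
          ((1 - NormedSpace.exp (-(s • H))).mulVec what))
        ≤ Real.sqrt (((1 - NormedSpace.exp (-(t • H))).mulVec what) ⬝ᵥ
          ((1 - NormedSpace.exp (-(t • H))).mulVec what)) := by
  intro s t hs hst
  rw [hpsd.isHermitian.one_sub_exp_neg_smul s, hpsd.isHermitian.one_sub_exp_neg_smul t]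
  refine Real.sqrt_le_sqrt (cfc_mulVec_dotProduct_self_le (fun x hx => ?_) what)
  exact Real.sq_one_sub_exp_neg_mul_le hs hst (spectrum_nonneg_of_nonneg hpsd.nonneg hx)
end

section
/- Fix x_1, …, x_n ∈ ℝ^d and y_1, …, y_n ∈ ℝ; set H = ∑_{i=1}^n x_i x_iᵀ and q = ∑_{i=1}^n y_i x_i. Let w : [0,∞) → ℝ^d be the solution of the linear gradient flow w'(t) = q − H w(t) with w(0) = 0. Then w(t) converges as t → ∞ to a limit ŵ ∈ ℝ^d such that ŵ is a global minimizer of the linear loss L_lin, and ŵ has minimum Euclidean norm among all global minimizers: ‖ŵ‖ ≤ ‖w'‖ for every global minimizer w' of L_lin. -/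
/-!
Diagonalise the Gram operator `H = ∑ xᵢ xᵢᵀ` in an orthonormal eigenbasis `eⱼ` with eigenvalues
`μⱼ ≥ 0`. The coordinate `⟪eⱼ, w⟫` solves `a' = ⟪eⱼ, q⟫ - μⱼ a`, `a 0 = 0`, so it tends to
`⟪eⱼ, q⟫ / μⱼ` when `μⱼ > 0` and stays `0` when `μⱼ = 0` (then `⟪eⱼ, q⟫ = 0`, since `q` is
orthogonal to `ker H`). The limit `ŵ = H⁺ q` solves the normal equation `H ŵ = q`, hence
`L v = L ŵ + ½ ∑ ⟪v - ŵ, xᵢ⟫²`: `ŵ` is a minimiser and every minimiser differs from it by an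
element of `ker H`, to which `ŵ` is orthogonal; Pythagoras gives the norm bound.
-/

open Filter Topology Module
open scoped RealInnerProductSpace

theorem tendsto_of_hasDerivAt_sub_mul {a : ℝ → ℝ} {μ c : ℝ} (hμ : 0 < μ)
    (ha : ∀ t, HasDerivAt a (c - μ * a t) t) : Tendsto a atTop (𝓝 (c / μ)) := by
  set g : ℝ → ℝ := fun t => (a t - c / μ) * Real.exp (μ * t)
  have hg : ∀ t, HasDerivAt g 0 t := by
    intro t
    have hexp : HasDerivAt (fun t => Real.exp (μ * t)) (Real.exp (μ * t) * μ) t :=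
      ((hasDerivAt_id t).const_mul μ).exp.congr_deriv (by simp)
    refine (((ha t).sub_const (c / μ)).mul hexp).congr_deriv ?_
    field_simp
    ring
  have hconst : ∀ t, g t = g 0 := fun t =>
    is_const_of_deriv_eq_zero (fun s => (hg s).differentiableAt) (fun s => (hg s).deriv) t 0
  have ha_eq : ∀ t, a t = c / μ + g 0 * Real.exp (-(μ * t)) := by
    intro t
    rw [← hconst t, mul_assoc, ← Real.exp_add, add_neg_cancel, Real.exp_zero, mul_one]
    ring
  have hexp : Tendsto (fun t => Real.exp (-(μ * t))) atTop (𝓝 0) :=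
    Real.tendsto_exp_atBot.comp (tendsto_neg_atTop_atBot.comp (tendsto_id.const_mul_atTop hμ))
  simpa [funext ha_eq] using (hexp.const_mul (g 0)).const_add (c / μ)

theorem tendsto_div_of_hasDerivAt_sub_mul {a : ℝ → ℝ} {μ c : ℝ} (hμ : 0 ≤ μ) (hc : μ = 0 → c = 0)
    (ha : ∀ t, HasDerivAt a (c - μ * a t) t) (ha0 : a 0 = 0) : Tendsto a atTop (𝓝 (c / μ)) := by
  rcases hμ.eq_or_lt with rfl | hμ
  · have hconst : ∀ t, a t = a 0 := fun t =>
      is_const_of_deriv_eq_zero (fun s => (ha s).differentiableAt)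
        (fun s => by simpa [hc rfl] using (ha s).deriv) t 0
    rw [funext fun t => (hconst t).trans ha0, div_zero]
    exact tendsto_const_nhds
  · exact tendsto_of_hasDerivAt_sub_mul hμ ha

section Spectral

variable {E : Type*} [NormedAddCommGroup E] [InnerProductSpace ℝ E] [FiniteDimensional ℝ E]
  {T : E →ₗ[ℝ] E} {m : ℕ}

namespace LinearMap.IsSymmetric

/-- Division by a zero eigenvalue gives `0`, so this is the Moore–Penrose pseudo-inverse of `T`
applied to `q`. -/
noncomputable def pinv (hT : T.IsSymmetric) (hm : finrank ℝ E = m) (q : E) : E :=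
  ∑ j, (⟪hT.eigenvectorBasis hm j, q⟫ / hT.eigenvalues hm j) • hT.eigenvectorBasis hm j

theorem apply_eigenvectorBasis_real (hT : T.IsSymmetric) (hm : finrank ℝ E = m) (j : Fin m) :
    T (hT.eigenvectorBasis hm j) = hT.eigenvalues hm j • hT.eigenvectorBasis hm j := by
  simpa only [RCLike.ofReal_real_eq_id, id_eq] using hT.apply_eigenvectorBasis hm j

theorem inner_eigenvectorBasis_eq_zero (hT : T.IsSymmetric) (hm : finrank ℝ E = m) {q : E}
    (hq : ∀ k, T k = 0 → ⟪q, k⟫ = 0) {j : Fin m} (hj : hT.eigenvalues hm j = 0) :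
    ⟪hT.eigenvectorBasis hm j, q⟫ = 0 := by
  rw [real_inner_comm]
  exact hq _ (by rw [hT.apply_eigenvectorBasis_real, hj, zero_smul])

theorem apply_pinv (hT : T.IsSymmetric) (hm : finrank ℝ E = m) {q : E}
    (hq : ∀ k, T k = 0 → ⟪q, k⟫ = 0) : T (hT.pinv hm q) = q := by
  conv_rhs => rw [← (hT.eigenvectorBasis hm).sum_repr' q]
  refine (map_sum T _ _).trans (Finset.sum_congr rfl fun j _ => ?_)
  rw [map_smul, hT.apply_eigenvectorBasis_real, smul_smul]
  congr 1
  by_cases hj : hT.eigenvalues hm j = 0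
  · simp [hj, hT.inner_eigenvectorBasis_eq_zero hm hq hj]
  · field_simp

theorem inner_pinv_eq_zero (hT : T.IsSymmetric) (hm : finrank ℝ E = m) (q : E) {k : E}
    (hk : T k = 0) : ⟪hT.pinv hm q, k⟫ = 0 := by
  refine (sum_inner _ _ _).trans (Finset.sum_eq_zero fun j _ => ?_)
  have : hT.eigenvalues hm j * ⟪hT.eigenvectorBasis hm j, k⟫ = 0 := by
    rw [← real_inner_smul_left, ← hT.apply_eigenvectorBasis_real, hT, hk, inner_zero_right]
  rcases mul_eq_zero.1 this with hj | hj <;> simp [real_inner_smul_left, hj]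

end LinearMap.IsSymmetric

theorem LinearMap.IsPositive.tendsto_pinv_of_hasDerivAt (hT : T.IsPositive)
    (hm : finrank ℝ E = m) {q : E} (hq : ∀ k, T k = 0 → ⟪q, k⟫ = 0) {w : ℝ → E}
    (hw0 : w 0 = 0) (hw : ∀ t, HasDerivAt w (q - T (w t)) t) :
    Tendsto w atTop (𝓝 (hT.isSymmetric.pinv hm q)) := by
  set e := hT.isSymmetric.eigenvectorBasis hm
  have hcoord : ∀ j, Tendsto (fun t => ⟪e j, w t⟫) atTop
      (𝓝 (⟪e j, q⟫ / hT.isSymmetric.eigenvalues hm j)) := by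
    intro j
    refine tendsto_div_of_hasDerivAt_sub_mul (hT.nonneg_eigenvalues hm j)
      (hT.isSymmetric.inner_eigenvectorBasis_eq_zero hm hq) (fun t => ?_) (by simp [hw0])
    refine ((hasDerivAt_const t (e j)).inner ℝ (hw t)).congr_deriv ?_
    rw [inner_zero_left, add_zero, inner_sub_right, ← hT.isSymmetric,
      hT.isSymmetric.apply_eigenvectorBasis_real, real_inner_smul_left]
  simpa only [e.sum_repr', LinearMap.IsSymmetric.pinv] using
    tendsto_finsetSum Finset.univ fun j _ => (hcoord j).smul_const (e j)

end Spectral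

section LeastSquares

variable {E : Type*} [NormedAddCommGroup E] [InnerProductSpace ℝ E] {ι : Type*} [Fintype ι]

def gram (x : ι → E) : E →ₗ[ℝ] E where
  toFun v := ∑ i, ⟪v, x i⟫ • x i
  map_add' u v := by simp only [inner_add_left, add_smul, Finset.sum_add_distrib]
  map_smul' c v := by simp only [real_inner_smul_left, mul_smul, Finset.smul_sum, RingHom.id_apply]

theorem gram_apply (x : ι → E) (v : E) : gram x v = ∑ i, ⟪v, x i⟫ • x i := rfl

theorem inner_gram_left (x : ι → E) (u v : E) : ⟪gram x u, v⟫ = ∑ i, ⟪u, x i⟫ * ⟪v, x i⟫ := by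
  rw [gram_apply, sum_inner]
  exact Finset.sum_congr rfl fun i _ => by rw [real_inner_smul_left, real_inner_comm v]

theorem isPositive_gram (x : ι → E) : (gram x).IsPositive := by
  refine (LinearMap.isPositive_iff _).2 ⟨fun u v => ?_, fun v => ?_⟩
  · rw [inner_gram_left, real_inner_comm, inner_gram_left]
    exact Finset.sum_congr rfl fun i _ => mul_comm _ _
  · rw [inner_gram_left]
    exact Finset.sum_nonneg fun i _ => mul_self_nonneg _

theorem gram_eq_zero_iff (x : ι → E) (v : E) : gram x v = 0 ↔ ∀ i, ⟪v, x i⟫ = 0 := by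
  refine ⟨fun h => ?_, fun h => by simp [gram_apply, h]⟩
  have hsum : ∑ i, ⟪v, x i⟫ * ⟪v, x i⟫ = 0 := by rw [← inner_gram_left, h, inner_zero_left]
  intro i
  exact mul_self_eq_zero.1
    ((Finset.sum_eq_zero_iff_of_nonneg fun i _ => mul_self_nonneg _).1 hsum i (Finset.mem_univ i))

theorem inner_sum_smul_eq_zero_of_gram_eq_zero (x : ι → E) (y : ι → ℝ) {k : E}
    (hk : gram x k = 0) : ⟪∑ i, y i • x i, k⟫ = 0 := by
  rw [sum_inner]
  exact Finset.sum_eq_zero fun i _ => by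
    rw [real_inner_smul_left, real_inner_comm k, (gram_eq_zero_iff x k).1 hk i, mul_zero]

noncomputable def lsqLoss (x : ι → E) (y : ι → ℝ) (v : E) : ℝ :=
  1 / 2 * ∑ i, (⟪v, x i⟫ - y i) ^ 2

theorem lsqLoss_eq_add_of_gram_eq {x : ι → E} {y : ι → ℝ} {u : E}
    (hu : gram x u = ∑ i, y i • x i) (v : E) :
    lsqLoss x y v = lsqLoss x y u + 1 / 2 * ∑ i, ⟪v - u, x i⟫ ^ 2 := by
  have hcross : ∑ i, (⟪u, x i⟫ - y i) * ⟪v - u, x i⟫ = 0 := by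
    calc ∑ i, (⟪u, x i⟫ - y i) * ⟪v - u, x i⟫ = ⟪gram x u - ∑ i, y i • x i, v - u⟫ := by
          rw [inner_sub_left, inner_gram_left, sum_inner, ← Finset.sum_sub_distrib]
          exact Finset.sum_congr rfl fun i _ => by
            rw [real_inner_smul_left, real_inner_comm (v - u)]
            ring
      _ = 0 := by rw [hu, sub_self, inner_zero_left]
  have hsplit : ∀ i, (⟪v, x i⟫ - y i) ^ 2
      = (⟪u, x i⟫ - y i) ^ 2 + 2 * ((⟪u, x i⟫ - y i) * ⟪v - u, x i⟫) + ⟪v - u, x i⟫ ^ 2 := by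
    intro i
    rw [inner_sub_left]
    ring
  simp only [lsqLoss, hsplit, Finset.sum_add_distrib, ← Finset.mul_sum, hcross]
  ring

theorem lsqLoss_le_of_gram_eq {x : ι → E} {y : ι → ℝ} {u : E}
    (hu : gram x u = ∑ i, y i • x i) (v : E) : lsqLoss x y u ≤ lsqLoss x y v := by
  rw [lsqLoss_eq_add_of_gram_eq hu v]
  have : 0 ≤ ∑ i, ⟪v - u, x i⟫ ^ 2 := Finset.sum_nonneg fun i _ => sq_nonneg _
  linarith

theorem gram_sub_eq_zero_of_lsqLoss_le {x : ι → E} {y : ι → ℝ} {u v : E}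
    (hu : gram x u = ∑ i, y i • x i) (hv : lsqLoss x y v ≤ lsqLoss x y u) :
    gram x (v - u) = 0 := by
  rw [lsqLoss_eq_add_of_gram_eq hu v] at hv
  have hsum : ∑ i, ⟪v - u, x i⟫ ^ 2 = 0 :=
    le_antisymm (by linarith) (Finset.sum_nonneg fun i _ => sq_nonneg _)
  refine (gram_eq_zero_iff x _).2 fun i => pow_eq_zero_iff two_ne_zero |>.1 ?_
  exact (Finset.sum_eq_zero_iff_of_nonneg fun i _ => sq_nonneg _).1 hsum i (Finset.mem_univ i)

end LeastSquares

theorem norm_le_norm_of_inner_sub_eq_zero {E : Type*} [NormedAddCommGroup E]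
    [InnerProductSpace ℝ E] {u v : E} (h : ⟪u, v - u⟫ = 0) : ‖u‖ ≤ ‖v‖ := by
  have := norm_add_sq_eq_norm_sq_add_norm_sq_real h
  rw [add_sub_cancel] at this
  exact le_of_sq_le_sq (by nlinarith [sq_nonneg ‖v - u‖]) (norm_nonneg v)

/-- The gradient flow of the linear least-squares loss initialized at `0`
converges to the minimum-Euclidean-norm global minimizer. -/
theorem stmt15 {n d : ℕ} (x : Fin n → EuclideanSpace ℝ (Fin d)) (y : Fin n → ℝ)
    (Llin : EuclideanSpace ℝ (Fin d) → ℝ)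
    (hL : ∀ w, Llin w = (1/2 : ℝ) * ∑ i, ((inner ℝ w (x i) : ℝ) - y i)^2)
    (w : ℝ → EuclideanSpace ℝ (Fin d))
    (hw0 : w 0 = 0)
    (hderiv : ∀ t : ℝ, HasDerivAt w
      ((∑ i, y i • x i) - ∑ i, (inner ℝ (w t) (x i) : ℝ) • x i) t) :
    ∃ what : EuclideanSpace ℝ (Fin d),
      Filter.Tendsto w Filter.atTop (nhds what) ∧
      (∀ w', Llin what ≤ Llin w') ∧
      (∀ w', (∀ w'', Llin w' ≤ Llin w'') → ‖what‖ ≤ ‖w'‖) := by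
  obtain rfl : Llin = lsqLoss x y := funext hL
  have hT := isPositive_gram x
  have hm : finrank ℝ (EuclideanSpace ℝ (Fin d)) = d := finrank_euclideanSpace_fin
  have hq : ∀ k, gram x k = 0 → ⟪∑ i, y i • x i, k⟫ = 0 := fun _ =>
    inner_sum_smul_eq_zero_of_gram_eq_zero x y
  have hnormal := hT.isSymmetric.apply_pinv hm hq
  refine ⟨hT.isSymmetric.pinv hm _, hT.tendsto_pinv_of_hasDerivAt hm hq hw0 hderiv,
    lsqLoss_le_of_gram_eq hnormal, fun v hv => norm_le_norm_of_inner_sub_eq_zero ?_⟩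
  exact hT.isSymmetric.inner_pinv_eq_zero hm _ (gram_sub_eq_zero_of_lsqLoss_le hnormal (hv _))
end

section
/- Let n ≥ 1, let b_1, …, b_n be distinct real numbers, let a_1, …, a_n ∈ ℝ, and let c ∈ ℝ. If the function f(t) = ∑_{i=1}^n a_i e^{b_i t} − c is not identically zero on ℝ, then its zero set {t ∈ ℝ : ∑_{i=1}^n a_i e^{b_i t} = c} is finite and has at most n elements. Moreover, in the homogeneous case c = 0 with not all a_i zero, the zero set has at most n − 1 elements. -/
/-!
Induction on the number of terms. Multiplying by `e^{-β t}`, where `β` is one of the exponents,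
does not change the zero set and makes the `β`-term constant; differentiating kills it and leaves
an exponential polynomial with one term fewer and still distinct exponents. By Rolle's theorem a
function has at most one zero more than its derivative. With a constant `c`, the same Rolle step
is applied once more, to `f - c`, whose derivative is homogeneous with `n` terms; if that derivative
has only zero coefficients, `f - c` is a nonzero constant.
-/

open Set Real

theorem Set.finite_and_ncard_le_of_interleaved {α : Type*} [LinearOrder α] {S T : Set α}
    (hT : T.Finite) (h : ∀ x ∈ S, ∀ y ∈ S, x < y → ∃ z ∈ T, x < z ∧ z < y) :
    S.Finite ∧ S.ncard ≤ T.ncard + 1 := by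
  have hcard : ∀ F : Finset α, ↑F ⊆ S → F.card ≤ T.ncard + 1 := fun F hF => by
    rw [ncard_eq_toFinset_card T hT]
    refine Finset.card_le_of_interleaved fun x hx y hy hxy _ => ?_
    obtain ⟨z, hz, hxz, hzy⟩ := h x (hF hx) y (hF hy) hxy
    exact ⟨z, hT.mem_toFinset.2 hz, hxz, hzy⟩
  have hS : S.Finite := by
    by_contra hS
    obtain ⟨F, hFS, hF⟩ := Set.Infinite.exists_subset_card_eq hS (T.ncard + 2)
    have := hcard F hFS
    omega
  refine ⟨hS, ?_⟩
  rw [ncard_eq_toFinset_card S hS]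
  exact hcard _ (by simp)

theorem finite_and_ncard_le_of_hasDerivAt {f f' : ℝ → ℝ} (hf : ∀ t, HasDerivAt f (f' t) t)
    (hf' : {t | f' t = 0}.Finite) (c : ℝ) :
    {t | f t = c}.Finite ∧ {t | f t = c}.ncard ≤ {t | f' t = 0}.ncard + 1 := by
  refine Set.finite_and_ncard_le_of_interleaved hf' fun x hx y hy hxy => ?_
  have hcont : ContinuousOn f (Icc x y) := fun t _ => (hf t).continuousAt.continuousWithinAt
  obtain ⟨z, hz, hz0⟩ := exists_hasDerivAt_eq_zero hxy hcont (hx.trans hy.symm) fun t _ => hf t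
  exact ⟨z, hz0, hz.1, hz.2⟩

section ExpPoly

variable {ι : Type*} (s : Finset ι) (a b : ι → ℝ)

noncomputable def expPoly (t : ℝ) : ℝ := ∑ i ∈ s, a i * exp (b i * t)

theorem hasDerivAt_expPoly (t : ℝ) :
    HasDerivAt (expPoly s a b) (expPoly s (fun i => a i * b i) b t) t := by
  unfold expPoly
  refine HasDerivAt.fun_sum fun i _ => ?_
  exact (((hasDerivAt_id' t).const_mul (b i)).exp.const_mul (a i)).congr_deriv (by ring)

theorem expPoly_eq_exp_mul_expPoly_sub (β t : ℝ) :
    expPoly s a b t = exp (β * t) * expPoly s a (fun i => b i - β) t := by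
  simp only [expPoly, Finset.mul_sum]
  refine Finset.sum_congr rfl fun i _ => ?_
  rw [mul_left_comm, ← exp_add]
  ring_nf

theorem setOf_expPoly_eq_zero_eq_sub (β : ℝ) :
    {t | expPoly s a b t = 0} = {t | expPoly s a (fun i => b i - β) t = 0} := by
  ext t
  simp [expPoly_eq_exp_mul_expPoly_sub s a b β t, exp_ne_zero]

theorem expPoly_eq_sum_of_mul_eq_zero (h : ∀ i ∈ s, a i * b i = 0) (t : ℝ) :
    expPoly s a b t = ∑ i ∈ s, a i := by
  refine Finset.sum_congr rfl fun i hi => ?_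
  rcases mul_eq_zero.1 (h i hi) with h0 | h0 <;> simp [h0]

theorem finite_and_ncard_add_one_le_of_expPoly_eq_zero (hb : Set.InjOn b s)
    (ha : ∃ i ∈ s, a i ≠ 0) :
    {t | expPoly s a b t = 0}.Finite ∧ {t | expPoly s a b t = 0}.ncard + 1 ≤ s.card := by
  classical
  induction s using Finset.induction_on generalizing a b with
  | empty => simp at ha
  | @insert j s hj ih =>
    rw [setOf_expPoly_eq_zero_eq_sub _ a b (b j), Finset.card_insert_of_notMem hj]
    set b' : ι → ℝ := fun i => b i - b j
    have hb' : Set.InjOn b' s := fun i hi k hk hik =>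
      hb (Finset.mem_insert_of_mem hi) (Finset.mem_insert_of_mem hk) (sub_left_injective hik)
    have hb'ne : ∀ i ∈ s, b' i ≠ 0 := fun i hi hi0 =>
      hj (hb (Finset.mem_insert_of_mem hi) (Finset.mem_insert_self j s) (sub_eq_zero.1 hi0) ▸ hi)
    have hderiv : ∀ t, HasDerivAt (expPoly (insert j s) a b')
        (expPoly s (fun i => a i * b' i) b' t) t := fun t => by
      convert hasDerivAt_expPoly (insert j s) a b' t using 1
      simp [expPoly, Finset.sum_insert hj, b']
    by_cases hs : ∀ i ∈ s, a i = 0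
    · have hconst : ∀ t, expPoly (insert j s) a b' t = a j := fun t => by
        simp only [expPoly, Finset.sum_insert hj, b', sub_self, zero_mul, exp_zero, mul_one,
          add_eq_left]
        exact Finset.sum_eq_zero fun i hi => by simp [hs i hi]
      obtain ⟨i, hi, hai⟩ := ha
      have haj : a j ≠ 0 := by
        rcases Finset.mem_insert.1 hi with rfl | hi
        exacts [hai, absurd (hs i hi) hai]
      simp [hconst, haj]
    · push Not at hs
      obtain ⟨i, hi, hai⟩ := hs
      obtain ⟨hfin', hcard'⟩ :=
        ih (fun i => a i * b' i) b' hb' ⟨i, hi, mul_ne_zero hai (hb'ne i hi)⟩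
      obtain ⟨hfin, hcard⟩ := finite_and_ncard_le_of_hasDerivAt hderiv hfin' 0
      exact ⟨hfin, Nat.succ_le_succ (hcard.trans hcard')⟩

end ExpPoly

theorem stmt17_general {n : ℕ} (a b : Fin n → ℝ)
    (hb : Function.Injective b) (c : ℝ) :
    ((¬ ∀ t : ℝ, ∑ i, a i * Real.exp (b i * t) = c) →
      {t : ℝ | ∑ i, a i * Real.exp (b i * t) = c}.Finite ∧
      {t : ℝ | ∑ i, a i * Real.exp (b i * t) = c}.ncard ≤ n) ∧
    (c = 0 → (∃ i, a i ≠ 0) →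
      {t : ℝ | ∑ i, a i * Real.exp (b i * t) = c}.Finite ∧
      {t : ℝ | ∑ i, a i * Real.exp (b i * t) = c}.ncard ≤ n - 1) := by
  have hzeros : ∀ a' : Fin n → ℝ, (∃ i, a' i ≠ 0) →
      {t | expPoly Finset.univ a' b t = 0}.Finite ∧
      {t | expPoly Finset.univ a' b t = 0}.ncard + 1 ≤ n := fun a' ha' => by
    simpa using finite_and_ncard_add_one_le_of_expPoly_eq_zero Finset.univ a' b hb.injOn
      (by simpa using ha')
  refine ⟨fun hc => ?_, fun hc ha => ?_⟩
  · by_cases hab : ∃ i, a i * b i ≠ 0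
    · obtain ⟨hfin', hcard'⟩ := hzeros _ hab
      obtain ⟨hfin, hcard⟩ :=
        finite_and_ncard_le_of_hasDerivAt (hasDerivAt_expPoly Finset.univ a b) hfin' c
      exact ⟨hfin, hcard.trans hcard'⟩
    · push Not at hab
      have hconst := expPoly_eq_sum_of_mul_eq_zero Finset.univ a b fun i _ => hab i
      have hempty : {t : ℝ | ∑ i, a i * exp (b i * t) = c} = ∅ :=
        eq_empty_of_forall_notMem fun t ht =>
          hc fun u => (hconst u).trans ((hconst t).symm.trans ht)
      simp [hempty]
  · subst hc
    obtain ⟨hfin, hcard⟩ := hzeros a ha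
    exact ⟨hfin, Nat.le_sub_one_of_lt hcard⟩

/-- An exponential polynomial `∑ aᵢ e^{bᵢ t} − c` with distinct exponents, if
not identically zero, has at most `n` zeros; in the homogeneous case `c = 0`
with not all coefficients zero, it has at most `n − 1` zeros. -/
theorem stmt17 {n : ℕ} (hn : 1 ≤ n) (a b : Fin n → ℝ)
    (hb : Function.Injective b) (c : ℝ) :
    ((¬ ∀ t : ℝ, ∑ i, a i * Real.exp (b i * t) = c) →
      {t : ℝ | ∑ i, a i * Real.exp (b i * t) = c}.Finite ∧
      {t : ℝ | ∑ i, a i * Real.exp (b i * t) = c}.ncard ≤ n) ∧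
    (c = 0 → (∃ i, a i ≠ 0) →
      {t : ℝ | ∑ i, a i * Real.exp (b i * t) = c}.Finite ∧
      {t : ℝ | ∑ i, a i * Real.exp (b i * t) = c}.ncard ≤ n - 1) :=
  stmt17_general a b hb c
end
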